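/- arXiv:2604.06579 — 2 statements merged into one kernel-verified Lean document; each statement's English description precedes it below -/
import Mathlib

section
/- If φ is an optimal (minimum-cost) specialization function with range X ∪ {n} where n ∉ X, then the normalized specialization function φ_X^n achieves the same cost: cost(φ) = cost(φ_X^n). -/
/-!
`φ_X^n` sends `i` to the least point of `X ∪ {n}` above `i`. Since `φ i` is such a point,
`φ_X^n i ≤ φ i`, so monotonicity of `s` gives `cost(φ_X^n) ≤ cost(φ)`. Moreover `φ_X^n` fixes every
point of `X ∪ {n}`, hence is itself a specialization function with the same range, and optimality
of `φ` gives the reverse inequality.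
-/

/-- The normalized specialization function `φ_X^n`. -/
noncomputable def normSpec (n : ℕ) (X : Finset ℕ) (i : ℕ) : ℕ :=
  sInf {x : ℕ | x ∈ insert n X ∧ i ≤ x}

/-- Cost of a specialization function. -/
def cost (n : ℕ) (s f φ : ℕ → ℕ) : ℕ :=
  ∑ i ∈ Finset.Icc 1 n, s (φ i) * f i

/-- `φ` is a specialization function with parameters `n`, `k` and range set `Y`. -/
def IsSpecFun (n k : ℕ) (φ : ℕ → ℕ) (Y : Finset ℕ) : Prop :=
  Y ⊆ Finset.Icc 1 n ∧ Y.card = k ∧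
  (∀ i ∈ Finset.Icc 1 n, φ i ∈ Y) ∧
  (∀ x ∈ Y, ∃ i ∈ Finset.Icc 1 n, φ i = x) ∧
  (∀ i ∈ Finset.Icc 1 n, i ≤ φ i)

section normSpec

variable {n : ℕ} {X : Finset ℕ} {i x : ℕ}

theorem normSpec_le (hx : x ∈ insert n X) (hix : i ≤ x) : normSpec n X i ≤ x :=
  Nat.sInf_le ⟨hx, hix⟩

theorem normSpec_mem_and_le_normSpec (hi : i ≤ n) :
    normSpec n X i ∈ insert n X ∧ i ≤ normSpec n X i :=
  Nat.sInf_mem (s := {x | x ∈ insert n X ∧ i ≤ x}) ⟨n, Finset.mem_insert_self n X, hi⟩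

theorem normSpec_of_mem (hx : x ∈ insert n X) (hxn : x ≤ n) : normSpec n X x = x :=
  le_antisymm (normSpec_le hx le_rfl) (normSpec_mem_and_le_normSpec hxn).2

end normSpec

theorem cost_le_cost {n : ℕ} {s f φ ψ : ℕ → ℕ}
    (h : ∀ i ∈ Finset.Icc 1 n, s (ψ i) ≤ s (φ i)) : cost n s f ψ ≤ cost n s f φ :=
  Finset.sum_le_sum fun i hi => Nat.mul_le_mul_right _ (h i hi)

section specFun

variable {n k : ℕ} {X : Finset ℕ} {φ : ℕ → ℕ}

theorem isSpecFun_normSpec (hφ : IsSpecFun n k φ (insert n X)) :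
    IsSpecFun n k (normSpec n X) (insert n X) := by
  obtain ⟨hsub, hcard, -, -, -⟩ := hφ
  refine ⟨hsub, hcard, fun i hi => ?_, fun x hx => ?_, fun i hi => ?_⟩
  · exact (normSpec_mem_and_le_normSpec (Finset.mem_Icc.mp hi).2).1
  · have hxn := Finset.mem_Icc.mp (hsub hx)
    exact ⟨x, hsub hx, normSpec_of_mem hx hxn.2⟩
  · exact (normSpec_mem_and_le_normSpec (Finset.mem_Icc.mp hi).2).2

theorem cost_normSpec_le {s f : ℕ → ℕ}
    (hs : ∀ i ∈ Finset.Icc 1 n, ∀ j ∈ Finset.Icc 1 n, i ≤ j → s i ≤ s j)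
    (hφ : IsSpecFun n k φ (insert n X)) : cost n s f (normSpec n X) ≤ cost n s f φ := by
  obtain ⟨hsub, -, hmem, -, hle⟩ := hφ
  refine cost_le_cost fun i hi => ?_
  have hnorm := (normSpec_mem_and_le_normSpec (X := X) (Finset.mem_Icc.mp hi).2).1
  exact hs _ (hsub hnorm) _ (hsub (hmem i hi)) (normSpec_le (hmem i hi) (hle i hi))

end specFun

theorem cost_eq_cost_normSpec_of_optimal_general (n k : ℕ)
    (s f : ℕ → ℕ)
    (hs : ∀ i ∈ Finset.Icc 1 n, ∀ j ∈ Finset.Icc 1 n, i ≤ j → s i ≤ s j)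
    (X : Finset ℕ)
    (φ : ℕ → ℕ) (hφ : IsSpecFun n k φ (insert n X))
    (hopt : ∀ (ψ : ℕ → ℕ) (Y : Finset ℕ), IsSpecFun n k ψ Y →
      cost n s f φ ≤ cost n s f ψ) :
    cost n s f φ = cost n s f (normSpec n X) :=
  le_antisymm (hopt _ _ (isSpecFun_normSpec hφ)) (cost_normSpec_le hs hφ)

/-- If `φ` is an optimal (minimum-cost) specialization function with range
`X ∪ {n}` where `n ∉ X`, then the normalized specialization function `φ_X^n`
achieves the same cost. -/
theorem cost_eq_cost_normSpec_of_optimal (n k : ℕ) (hn : 1 ≤ n)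
    (s f : ℕ → ℕ)
    (hs : ∀ i ∈ Finset.Icc 1 n, ∀ j ∈ Finset.Icc 1 n, i ≤ j → s i ≤ s j)
    (X : Finset ℕ) (hnX : n ∉ X)
    (φ : ℕ → ℕ) (hφ : IsSpecFun n k φ (insert n X))
    (hopt : ∀ (ψ : ℕ → ℕ) (Y : Finset ℕ), IsSpecFun n k ψ Y →
      cost n s f φ ≤ cost n s f ψ) :
    cost n s f φ = cost n s f (normSpec n X) :=
  cost_eq_cost_normSpec_of_optimal_general n k s f hs X φ hφ hopt
end

section
/- Correctness of the dynamic program: define y_{j,1} = c(1,j) for j ∈ [1,n], y_{1,l} = M for l ∈ [2,k] (M an infeasibility constant larger than any feasible cost), and y_{j,l+1} = min over 1 ≤ i < j of (y_{i,l} + c(i+1,j)). Then for all j ∈ [1,n] and l ∈ [1,k], if an l-partition of [1,j] into consecutive nonempty intervals exists (i.e. l ≤ j), y_{j,l} equals the minimum total cost of any partition of [1,j] into exactly l consecutive nonempty intervals, where an interval [a,b] contributes c(a,b). -/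
/-- Interval cost `c(a,b) = s(b) · Σ_{i=a}^{b} f(i)`. -/
def intervalCost (s f : ℕ → ℕ) (a b : ℕ) : ℕ :=
  s b * ∑ i ∈ Finset.Icc a b, f i

/-- The dynamic-programming table:
`y j 1 = c 1 j`, `y 1 l = M` for `l ≥ 2`, and
`y j (l+1) = min_{1 ≤ i < j} (y i l + c (i+1) j)`. -/
noncomputable def dpY (c : ℕ → ℕ → ℕ) (M : ℕ) : ℕ → ℕ → ℕ
  | _, 0 => M
  | j, 1 => c 1 j
  | j, l + 2 =>
    if j ≤ 1 then M
    else sInf {v : ℕ | ∃ i, 1 ≤ i ∧ i < j ∧ v = dpY c M i (l + 1) + c (i + 1) j}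
  termination_by _ l => l

/-- The set of total costs of partitions of `[1,j]` into exactly `l`
consecutive nonempty intervals, each interval `[a,b]` contributing `c a b`. -/
def partitionCosts (c : ℕ → ℕ → ℕ) (j l : ℕ) : Set ℕ :=
  {v : ℕ | ∃ t : ℕ → ℕ, t 0 = 0 ∧ t l = j ∧ (∀ m < l, t m < t (m + 1)) ∧
    v = ∑ m ∈ Finset.Icc 1 l, c (t (m - 1) + 1) (t m)}

lemma t_mono {t : ℕ → ℕ} {l : ℕ} (h : ∀ m < l, t m < t (m + 1)) :
    ∀ a b, a ≤ b → b ≤ l → t a ≤ t b := by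
  intro a b hab hbl
  induction b, hab using Nat.le_induction with
  | base => exact le_refl _
  | succ b hab ih =>
    exact le_trans (ih (by omega)) (le_of_lt (h b (by omega)))

lemma t_ge {t : ℕ → ℕ} {l : ℕ} (h0 : t 0 = 0) (h : ∀ m < l, t m < t (m + 1)) :
    ∀ m ≤ l, m ≤ t m := by
  intro m hm
  induction m with
  | zero => omega
  | succ m ih => have := h m (by omega); have := ih (by omega); omega

lemma dpY_infeasible (c : ℕ → ℕ → ℕ) (M : ℕ) :
    ∀ l j, 1 ≤ j → j < l + 2 → M ≤ dpY c M j (l + 2) := by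
  intro l
  induction l with
  | zero =>
    intro j h1 h2
    have : j = 1 := by omega
    subst this
    rw [dpY]; simp
  | succ l ih =>
    intro j h1 h2
    rw [dpY]
    by_cases hj : j ≤ 1
    · simp [hj]
    · simp only [hj, if_false]
      set S := {v : ℕ | ∃ i, 1 ≤ i ∧ i < j ∧ v = dpY c M i (l + 1 + 1) + c (i + 1) j}
      have hne : S.Nonempty := ⟨dpY c M 1 (l + 2) + c 2 j, 1, le_refl _, by omega, rfl⟩
      have hmem := Nat.sInf_mem hne
      obtain ⟨i, hi1, hij, heq⟩ := hmem
      rw [heq]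
      have : M ≤ dpY c M i (l + 1 + 1) := ih i hi1 (by omega)
      omega

lemma cost_bound (n : ℕ) (s f : ℕ → ℕ)
    (hs : ∀ i ∈ Finset.Icc 1 n, ∀ j ∈ Finset.Icc 1 n, i ≤ j → s i ≤ s j)
    {t : ℕ → ℕ} {l j : ℕ} (h0 : t 0 = 0) (hl : t l = j)
    (hmono : ∀ m < l, t m < t (m + 1)) (hj : j ≤ n) :
    ∑ m ∈ Finset.Icc 1 l, intervalCost s f (t (m - 1) + 1) (t m) ≤
      intervalCost s f 1 n * n := by
  have hln : l ≤ n := by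
    have := t_ge h0 hmono l le_rfl
    omega
  calc ∑ m ∈ Finset.Icc 1 l, intervalCost s f (t (m - 1) + 1) (t m)
      ≤ ∑ m ∈ Finset.Icc 1 l, intervalCost s f 1 n := by
        apply Finset.sum_le_sum
        intro m hm
        simp only [Finset.mem_Icc] at hm
        have htm1 : m ≤ t m := t_ge h0 hmono m hm.2
        have htmn : t m ≤ n := by
          have := t_mono hmono m l hm.2 le_rfl
          omega
        unfold intervalCost
        apply Nat.mul_le_mul
        · exact hs (t m) (by simp [Finset.mem_Icc]; omega) n
            (by simp [Finset.mem_Icc]; omega) htmn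
        · apply Finset.sum_le_sum_of_subset
          apply Finset.Icc_subset_Icc <;> omega
    _ ≤ intervalCost s f 1 n * n := by
        rw [Finset.sum_const, Nat.card_Icc, smul_eq_mul]
        have : l + 1 - 1 = l := by omega
        rw [this, mul_comm]
        exact Nat.mul_le_mul_left _ hln

lemma partition_extend {c : ℕ → ℕ → ℕ} {i j l : ℕ} {v : ℕ}
    (hv : v ∈ partitionCosts c i (l + 1)) (hij : i < j) :
    v + c (i + 1) j ∈ partitionCosts c j (l + 2) := by
  obtain ⟨t, h0, hl, hmono, hveq⟩ := hv
  refine ⟨fun m => if m ≤ l + 1 then t m else j, by simp [h0], by simp, ?_, ?_⟩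
  · intro m hm
    by_cases h : m + 1 ≤ l + 1
    · simp only [show m ≤ l + 1 by omega, if_true, h, if_true]
      exact hmono m (by omega)
    · have hm1 : m = l + 1 := by omega
      subst hm1
      simp only [le_refl, if_true, show ¬ (l + 1 + 1 ≤ l + 1) by omega, if_false]
      rw [hl]; exact hij
  · rw [Finset.sum_Icc_succ_top (by omega : 1 ≤ l + 2)]
    have h1 : ∑ m ∈ Finset.Icc 1 (l + 1),
        c ((if m - 1 ≤ l + 1 then t (m - 1) else j) + 1)
          (if m ≤ l + 1 then t m else j)
        = ∑ m ∈ Finset.Icc 1 (l + 1), c (t (m - 1) + 1) (t m) := by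
      apply Finset.sum_congr rfl
      intro m hm
      simp only [Finset.mem_Icc] at hm
      rw [if_pos (by omega), if_pos (by omega)]
    simp only [h1]
    rw [if_pos (by omega : l + 2 - 1 ≤ l + 1), if_neg (by omega : ¬ (l + 2 ≤ l + 1))]
    have : l + 2 - 1 = l + 1 := by omega
    rw [this, hl, ← hveq]

lemma partition_restrict {c : ℕ → ℕ → ℕ} {j l v : ℕ}
    (hv : v ∈ partitionCosts c j (l + 2)) :
    ∃ i, l + 1 ≤ i ∧ i < j ∧ ∃ w, w ∈ partitionCosts c i (l + 1) ∧ v = w + c (i + 1) j := by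
  obtain ⟨t, h0, hl, hmono, hveq⟩ := hv
  refine ⟨t (l + 1), t_ge h0 hmono (l + 1) (by omega), ?_, 
    ∑ m ∈ Finset.Icc 1 (l + 1), c (t (m - 1) + 1) (t m),
    ⟨t, h0, rfl, fun m hm => hmono m (by omega), rfl⟩, ?_⟩
  · rw [← hl]; exact hmono (l + 1) (by omega)
  · rw [hveq, Finset.sum_Icc_succ_top (by omega : 1 ≤ l + 2)]
    have h2 : l + 2 - 1 = l + 1 := by omega
    rw [h2, hl]

lemma dpY_least (n : ℕ) (hn : 1 ≤ n) (s f : ℕ → ℕ)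
    (hs : ∀ i ∈ Finset.Icc 1 n, ∀ j ∈ Finset.Icc 1 n, i ≤ j → s i ≤ s j)
    (M : ℕ) (hM : intervalCost s f 1 n * n < M) :
    ∀ l j, 1 ≤ j → j ≤ n → l + 1 ≤ j →
      IsLeast (partitionCosts (intervalCost s f) j (l + 1))
        (dpY (intervalCost s f) M j (l + 1)) := by
  set c := intervalCost s f with hc
  have hlt : ∀ {j l v : ℕ}, j ≤ n → v ∈ partitionCosts c j l → v < M := by
    rintro j l v hj ⟨t, h0, hl, hmono, hveq⟩
    have := cost_bound n s f hs h0 hl hmono hj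
    rw [← hc] at this
    omega
  intro l
  induction l with
  | zero =>
    intro j h1 hjn hlj
    have hdp1 : dpY c M j 1 = c 1 j := by simp [dpY]
    constructor
    · refine ⟨fun m => if m = 0 then 0 else j, by simp, by simp, ?_, ?_⟩
      · intro m hm
        have : m = 0 := by omega
        subst this
        simp; omega
      · rw [hdp1]; simp
    · rintro v ⟨t, h0, h1', hm, hv⟩
      rw [hdp1, hv]
      simp only [Finset.Icc_self, Finset.sum_singleton]
      norm_num
      rw [h0, h1']
  | succ l ih =>
    intro j h1 hjn hlj
    have hjle : ¬ j ≤ 1 := by omega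
    set S := {v : ℕ | ∃ i, 1 ≤ i ∧ i < j ∧ v = dpY c M i (l + 1) + c (i + 1) j} with hS
    have hdp : dpY c M j (l + 1 + 1) = sInf S := by
      rw [dpY]; simp only [hjle, if_false]; rfl
    -- feasible candidate i0 = j - 1
    obtain ⟨hmem0, hlb0⟩ := ih (j - 1) (by omega) (by omega) (by omega)
    have hv0mem : dpY c M (j - 1) (l + 1) + c (j - 1 + 1) j ∈ partitionCosts c j (l + 2) :=
      partition_extend hmem0 (by omega)
    have hv0S : dpY c M (j - 1) (l + 1) + c (j - 1 + 1) j ∈ S := ⟨j - 1, by omega, by omega, rfl⟩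
    have hv0lt : dpY c M (j - 1) (l + 1) + c (j - 1 + 1) j < M := hlt hjn hv0mem
    have hinfle := Nat.sInf_le hv0S
    have hSne : S.Nonempty := ⟨_, hv0S⟩
    obtain ⟨i, hi1, hij, hieq⟩ := Nat.sInf_mem hSne
    have hfeas : l + 1 ≤ i := by
      by_contra h
      push_neg at h
      obtain ⟨l', rfl⟩ : ∃ l', l = l' + 1 := ⟨l - 1, by omega⟩
      have h2 : M ≤ dpY c M i (l' + 1 + 1) := dpY_infeasible c M l' i hi1 (by omega)
      omega
    obtain ⟨hmemi, hlbi⟩ := ih i (by omega) (by omega) hfeas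
    constructor
    · rw [hdp, hieq]
      exact partition_extend hmemi hij
    · rintro v hvmem
      obtain ⟨i', hi'l, hi'j, w, hw, hveq⟩ := partition_restrict hvmem
      obtain ⟨_, hlb'⟩ := ih i' (by omega) (by omega) hi'l
      have hwge : dpY c M i' (l + 1) ≤ w := hlb' hw
      have hin : dpY c M i' (l + 1) + c (i' + 1) j ∈ S := ⟨i', by omega, hi'j, rfl⟩
      have := Nat.sInf_le hin
      rw [hdp]
      omega

/-- Correctness of the dynamic program: for all `j ∈ [1,n]` and `l ∈ [1,k]`
with `l ≤ j` (so that an `l`-partition of `[1,j]` exists), `y j l` is the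
minimum total cost of any partition of `[1,j]` into exactly `l` consecutive
nonempty intervals. -/
theorem dpY_correct (n k : ℕ) (hn : 1 ≤ n) (hk : 1 ≤ k) (hkn : k ≤ n)
    (s f : ℕ → ℕ)
    (hs : ∀ i ∈ Finset.Icc 1 n, ∀ j ∈ Finset.Icc 1 n, i ≤ j → s i ≤ s j)
    (M : ℕ) (hM : intervalCost s f 1 n * n < M) :
    ∀ j ∈ Finset.Icc 1 n, ∀ l ∈ Finset.Icc 1 k, l ≤ j →
      IsLeast (partitionCosts (intervalCost s f) j l)
        (dpY (intervalCost s f) M j l) := by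
  intro j hj l hl hlj
  simp only [Finset.mem_Icc] at hj hl
  obtain ⟨l', rfl⟩ : ∃ l', l = l' + 1 := ⟨l - 1, by omega⟩
  exact dpY_least n hn s f hs M hM l' j hj.1 hj.2 hlj
end
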